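/- Let v be a finite N-player game with m actions per player, x a Nash equilibrium of v, and suppose that for every player i and action b, the set E_{i,b} = Aᵢ × {a₋ᵢ : |vᵢ(b,a₋ᵢ) − vᵢ(b,x₋ᵢ)| ≤ ε/2} (viewed as a subset of the full profile space A) satisfies x(E_{i,b}ᶜ) ≤ 1/(2Nm), where x is viewed as the product measure on A. Then v has a pure Nash ε-equilibrium in the support of x. -/
import Mathlib

attribute [local instance] Classical.propDecidable

noncomputable section

/-- Expected payoff under a mixed profile, for general action sets. -/
def expPayG {N : ℕ} {A : Fin N → Type*} [∀ i, Fintype (A i)]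
    (v : (∀ i, A i) → ℝ) (x : ∀ i, A i → ℝ) : ℝ :=
  ∑ a : ∀ i, A i, (∏ i, x i (a i)) * v a

/-- The point mass at action `b`. -/
def pureG {N : ℕ} {A : Fin N → Type*} {i : Fin N} (b : A i) : A i → ℝ :=
  fun j => if j = b then 1 else 0

/-- Union bound helper. -/
lemma sum_biUnion_le' {ι α : Type*} [DecidableEq α] (s : Finset ι) (t : ι → Finset α)
    (f : α → ℝ) (hf : ∀ a, 0 ≤ f a) :
    ∑ a ∈ s.biUnion t, f a ≤ ∑ i ∈ s, ∑ a ∈ t i, f a := by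
  classical
  induction s using Finset.induction_on with
  | empty => simp
  | @insert i s hnotmem ih =>
    rw [Finset.biUnion_insert, Finset.sum_insert hnotmem]
    have h1 : ∑ a ∈ t i ∪ s.biUnion t, f a ≤ ∑ a ∈ t i, f a + ∑ a ∈ s.biUnion t, f a := by
      have h2 := Finset.sum_union_inter (s₁ := t i) (s₂ := s.biUnion t) (f := f)
      have h0 : 0 ≤ ∑ a ∈ t i ∩ s.biUnion t, f a := Finset.sum_nonneg fun a _ => hf a
      linarith
    exact h1.trans (by linarith)

/-- Multilinearity: the expected payoff is the mixture over player `i`'s actions of the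
expected payoffs of the corresponding pure deviations. -/
lemma expPay_decomp {N : ℕ} {A : Fin N → Type*} [∀ i, Fintype (A i)]
    (v : (∀ i, A i) → ℝ) (x : ∀ i, A i → ℝ) (i : Fin N) :
    expPayG v x = ∑ b : A i, x i b * expPayG v (Function.update x i (pureG b)) := by
  classical
  unfold expPayG
  simp_rw [Finset.mul_sum]
  rw [Finset.sum_comm]
  refine Finset.sum_congr rfl fun a _ => ?_
  have hprod : ∀ b : A i, (∏ j, Function.update x i (pureG b) j (a j))
      = (if a i = b then (1:ℝ) else 0) * ∏ j ∈ Finset.univ.erase i, x j (a j) := by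
    intro b
    rw [← Finset.mul_prod_erase Finset.univ _ (Finset.mem_univ i)]
    congr 1
    · simp [pureG]
    · exact Finset.prod_congr rfl fun j hj =>
        congrFun (Function.update_of_ne (Finset.ne_of_mem_erase hj) _ _) _
  simp_rw [hprod]
  rw [Finset.sum_eq_single (a i) (fun b _ hb => by simp [Ne.symm hb])
    (fun h => absurd (Finset.mem_univ _) h)]
  rw [if_pos rfl, one_mul, ← mul_assoc,
    Finset.mul_prod_erase Finset.univ (fun j => x j (a j)) (Finset.mem_univ i)]

/-- If `x` is a Nash equilibrium of `v` and, for every player `i` and action `b`, the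
complement of the event `E_{i,b} = {a : |vᵢ(b,a₋ᵢ) − vᵢ(b,x₋ᵢ)| ≤ ε/2}` has product
`x`-measure at most `1/(2Nm)`, then `v` has a pure Nash ε-equilibrium in the support
of `x`. -/
theorem stmt_18 {N m : ℕ} (hN : 0 < N) (hm : 0 < m)
    {A : Fin N → Type*} [∀ i, Fintype (A i)] (hcard : ∀ i, Fintype.card (A i) = m)
    (v : Fin N → (∀ i, A i) → ℝ)
    (hv : ∀ i a, v i a ∈ Set.Icc (0 : ℝ) 1)
    (x : ∀ i, A i → ℝ) (hnn : ∀ i b, 0 ≤ x i b) (hsum : ∀ i, ∑ b, x i b = 1)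
    (hNash : ∀ (i : Fin N) (b : A i),
      expPayG (v i) (Function.update x i (pureG b)) ≤ expPayG (v i) x)
    (ε : ℝ) (hε : 0 < ε)
    (hmeas : ∀ (i : Fin N) (b : A i),
      ∑ a ∈ Finset.univ.filter (fun a : ∀ j, A j =>
          ¬ |v i (Function.update a i b) -
              expPayG (v i) (Function.update x i (pureG b))| ≤ ε / 2),
        ∏ j, x j (a j) ≤ 1 / (2 * N * m)) :
    ∃ astar : ∀ i, A i, (∀ i, 0 < x i (astar i)) ∧
      ∀ (i : Fin N) (b : A i), v i (Function.update astar i b) - ε ≤ v i astar := by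
  classical
  set w : (∀ j, A j) → ℝ := fun a => ∏ j, x j (a j) with hwdef
  have hwnn : ∀ a, 0 ≤ w a := fun a => Finset.prod_nonneg fun j _ => hnn j (a j)
  have hsum1 : ∑ a : ∀ j, A j, w a = 1 := by
    rw [hwdef, ← Fintype.prod_sum (fun j (b : A j) => x j b)]
    simp [hsum]
  set Bad : (Σ i : Fin N, A i) → Finset (∀ j, A j) := fun p =>
    Finset.univ.filter (fun a => ¬ |v p.1 (Function.update a p.1 p.2) -
        expPayG (v p.1) (Function.update x p.1 (pureG p.2))| ≤ ε / 2) with hBad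
  set G : Finset (∀ j, A j) := Finset.univ.filter (fun a => ∀ i b,
      |v i (Function.update a i b) -
        expPayG (v i) (Function.update x i (pureG b))| ≤ ε / 2) with hG
  have hGc : Finset.univ \ G ⊆ Finset.univ.biUnion Bad := by
    intro a ha
    rw [Finset.mem_sdiff] at ha
    rw [hG, Finset.mem_filter] at ha
    push_neg at ha
    obtain ⟨i, b, h⟩ := ha.2 ha.1
    rw [Finset.mem_biUnion]
    exact ⟨⟨i, b⟩, Finset.mem_univ _, by rw [hBad]; exact Finset.mem_filter.2 ⟨Finset.mem_univ _, not_le.2 h⟩⟩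
  have hNm : (0:ℝ) < 2 * N * m := by positivity
  have hbad_le : ∑ a ∈ Finset.univ \ G, w a ≤ 1/2 := by
    calc ∑ a ∈ Finset.univ \ G, w a ≤ ∑ a ∈ Finset.univ.biUnion Bad, w a :=
          Finset.sum_le_sum_of_subset_of_nonneg hGc (fun a _ _ => hwnn a)
      _ ≤ ∑ p : Σ i : Fin N, A i, ∑ a ∈ Bad p, w a := sum_biUnion_le' _ _ _ hwnn
      _ ≤ ∑ _p : Σ i : Fin N, A i, 1/(2*(N:ℝ)*(m:ℝ)) :=
          Finset.sum_le_sum fun p _ => hmeas p.1 p.2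
      _ = ((N:ℝ) * m) * (1/(2*(N:ℝ)*(m:ℝ))) := by
          rw [Finset.sum_const, nsmul_eq_mul]
          congr 1
          simp [Fintype.card_sigma, hcard]
      _ = 1/2 := by field_simp
  have hGsum : 1/2 ≤ ∑ a ∈ G, w a := by
    have := Finset.sum_sdiff (f := w) (Finset.subset_univ G)
    rw [hsum1] at this
    linarith
  have hexists : ∃ a ∈ G, 0 < w a := by
    by_contra h
    push_neg at h
    have : ∑ a ∈ G, w a ≤ 0 := Finset.sum_nonpos fun a ha => h a ha
    linarith
  obtain ⟨astar, haG, haw⟩ := hexists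
  have hpos : ∀ j, 0 < x j (astar j) := by
    intro j
    rcases lt_or_eq_of_le (hnn j (astar j)) with h | h
    · exact h
    · exfalso
      have : w astar = 0 := by
        rw [hwdef]; exact Finset.prod_eq_zero (Finset.mem_univ j) h.symm
      linarith
  have hGo : ∀ i b, |v i (Function.update astar i b) -
      expPayG (v i) (Function.update x i (pureG b))| ≤ ε/2 := by
    rw [hG, Finset.mem_filter] at haG
    exact haG.2
  have heq : ∀ i : Fin N,
      expPayG (v i) (Function.update x i (pureG (astar i))) = expPayG (v i) x := by
    intro i
    by_contra hne
    have hlt : expPayG (v i) (Function.update x i (pureG (astar i))) < expPayG (v i) x :=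
      lt_of_le_of_ne (hNash i _) hne
    have hstrict : ∑ b : A i, x i b * expPayG (v i) (Function.update x i (pureG b))
        < ∑ b : A i, x i b * expPayG (v i) x := by
      apply Finset.sum_lt_sum
      · intro b _; exact mul_le_mul_of_nonneg_left (hNash i b) (hnn i b)
      · exact ⟨astar i, Finset.mem_univ _, mul_lt_mul_of_pos_left hlt (hpos i)⟩
    rw [← expPay_decomp (v i) x i, ← Finset.sum_mul, hsum i, one_mul] at hstrict
    exact lt_irrefl _ hstrict
  refine ⟨astar, hpos, fun i b => ?_⟩
  have h1 := abs_le.1 (hGo i b)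
  have h2' := hGo i (astar i)
  rw [Function.update_eq_self] at h2'
  have h2 := abs_le.1 h2'
  have h3 := hNash i b
  rw [← heq i] at h3
  linarith [h1.1, h1.2, h2.1, h2.2]
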